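/- Assume 1 + σ_ε + σ_ε² = 0, ρ_z² σ_{g²} = 1 and ρ_g = −1. In V ⊗ W set w′ = v₀⊗(w₀ − ρ_z w₁), and in V ⊗ (V ⊗ W) set w″ = v₂⊗w′ + ρ_g² v₀⊗(ε·w′) − ρ_g v₁⊗(ε²·w′). Then w″ ≠ 0, the vectors w″ and g·w″ are linearly independent, ε·w″ = w″, g²·w″ = ρ_z⁻² w″ and z·w″ = ρ_z² σ_z w″. -/

import Mathlib

/-!
Since `ρ_g = -1`, the element `g²` acts on `V` by `ρ_g² = 1` and on `W` by `σ_{g²} = ρ_z⁻²`,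
while `z` acts on `V` and `W` by `ρ_z` and `σ_z`; so `g²` and `z` act on `V ⊗ (V ⊗ W)` by
scalars. As `ε` cycles `v₀ ↦ v₁ ↦ v₂ ↦ v₀` and `ε³ = 1`, the vector
`w″ = v₂ ⊗ w′ + v₀ ⊗ ε·w′ + v₁ ⊗ ε²·w′` is fixed by `ε`. Finally, the `v₂ ⊗ v₀ ⊗ w₀`-coordinate
of `w″` is `1`, whereas `g·w″` only involves `v_a ⊗ v_b ⊗ -` with
`(a, b) ∈ {(1, 0), (0, 2), (2, 1)}`; as `g` acts injectively, `w″` and `g·w″` are independent.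
-/

open TensorProduct

theorem linearIndependent_pair_of_apply_eq_zero {K M : Type*} [Field K] [AddCommGroup M]
    [Module K M] (f : M →ₗ[K] K) {x y : M} (hx : f x ≠ 0) (hy : f y = 0) (hy₀ : y ≠ 0) :
    LinearIndependent K ![x, y] := by
  rw [LinearIndependent.pair_symm_iff, LinearIndependent.pair_iff' hy₀]
  rintro a rfl
  simp [hy] at hx

namespace Representation

variable {K G V W : Type*} [Field K] [Group G] [AddCommGroup V] [Module K V]
  [AddCommGroup W] [Module K W]

theorem tprod_apply_eq_smul_one (ρ : Representation K G V) (σ : Representation K G W) {x : G}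
    {a b : K} (hρ : ρ x = a • 1) (hσ : σ x = b • 1) : ρ.tprod σ x = (a * b) • 1 := by
  rw [tprod_apply, hρ, hσ, TensorProduct.map_smul_left, TensorProduct.map_smul_right,
    TensorProduct.map_one, smul_smul]

theorem tprod_apply_cyclic_sum_eq_self (ρ : Representation K G V) (σ : Representation K G W)
    {ε : G} (hε : ε ^ 3 = 1) {a b c : V} (ha : ρ ε a = b) (hb : ρ ε b = c) (hc : ρ ε c = a)
    (u : W) :
    ρ.tprod σ ε (c ⊗ₜ u + a ⊗ₜ σ ε u + b ⊗ₜ σ (ε ^ 2) u) =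
      c ⊗ₜ u + a ⊗ₜ σ ε u + b ⊗ₜ σ (ε ^ 2) u := by
  have h2 : σ ε (σ ε u) = σ (ε ^ 2) u := by rw [pow_two, map_mul, Module.End.mul_apply]
  have h3 : σ ε (σ (ε ^ 2) u) = u := by
    rw [← Module.End.mul_apply, ← map_mul, ← pow_succ', hε, map_one, Module.End.one_apply]
  simp only [tprod_apply, map_add, map_tmul, ha, hb, hc, h2, h3]
  abel

end Representation

namespace Module.End

variable {K V : Type*} [Field K] [AddCommGroup V] [Module K V] (f : Module.End K V)

theorem sq_eq_smul_one_of_swap_fin_three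
    (v : Module.Basis (Fin 3) K V) {c : K} (h₀ : f (v 0) = c • v 0)
    (h₁ : f (v 1) = c • v 2) (h₂ : f (v 2) = c • v 1) : f ^ 2 = c ^ 2 • 1 := by
  refine v.ext fun i => ?_
  fin_cases i <;> simp [pow_two, h₀, h₁, h₂, smul_smul]

theorem sq_eq_smul_one_of_swap_fin_two (w : Module.Basis (Fin 2) K V) {c : K} (h₀ : f (w 0) = w 1)
    (h₁ : f (w 1) = c • w 0) : f ^ 2 = c • 1 := by
  refine w.ext fun i => ?_
  fin_cases i <;> simp [pow_two, h₀, h₁]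

end Module.End

theorem second_pair_adV_sq_W_general
    {K : Type*} [Field K] {G : Type*} [Group G]
    (g ε z : G)
    (hrel2 : ε ^ 3 = 1)
    {V : Type*} [AddCommGroup V] [Module K V]
    (ρ : Representation K G V) (v : Module.Basis (Fin 3) K V)
    (ρg ρz : K)
    (hεv0 : ρ ε (v 0) = v 1) (hεv1 : ρ ε (v 1) = v 2) (hεv2 : ρ ε (v 2) = v 0)
    (hzv : ∀ i, ρ z (v i) = ρz • v i)
    (hgv0 : ρ g (v 0) = ρg • v 0) (hgv1 : ρ g (v 1) = ρg • v 2)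
    (hgv2 : ρ g (v 2) = ρg • v 1)
    {W : Type*} [AddCommGroup W] [Module K W]
    (σ : Representation K G W) (w : Module.Basis (Fin 2) K W)
    (σz σg2 : K)
    (hzw0 : σ z (w 0) = σz • w 0) (hzw1 : σ z (w 1) = σz • w 1)
    (hgw0 : σ g (w 0) = w 1) (hgw1 : σ g (w 1) = σg2 • w 0)
    (hcond2 : ρz ^ 2 * σg2 = 1)
    (hcond3 : ρg = -1) :
    ∀ (w' : V ⊗[K] W) (w'' : V ⊗[K] (V ⊗[K] W)),
      w' = v 0 ⊗ₜ[K] (w 0 - ρz • w 1) →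
      w'' = v 2 ⊗ₜ[K] w' + ρg ^ 2 • (v 0 ⊗ₜ[K] ((ρ.tprod σ) ε w')) -
        ρg • (v 1 ⊗ₜ[K] ((ρ.tprod σ) (ε ^ 2) w')) →
      w'' ≠ 0 ∧
      LinearIndependent K ![w'', (ρ.tprod (ρ.tprod σ)) g w''] ∧
      (ρ.tprod (ρ.tprod σ)) ε w'' = w'' ∧
      (ρ.tprod (ρ.tprod σ)) (g ^ 2) w'' = ρz⁻¹ ^ 2 • w'' ∧
      (ρ.tprod (ρ.tprod σ)) z w'' = (ρz ^ 2 * σz) • w'' := by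
  intro w' w'' hw' hw''
  subst hcond3
  have hρz : ρ z = ρz • 1 := v.ext fun i => by simpa using hzv i
  have hσz : σ z = σz • 1 := w.ext fun i => by fin_cases i <;> simp [hzw0, hzw1]
  have hρg2 : ρ (g ^ 2) = (-1 : K) ^ 2 • 1 := by
    rw [map_pow, Module.End.sq_eq_smul_one_of_swap_fin_three (ρ g) v hgv0 hgv1 hgv2]
  have hσg2 : σ (g ^ 2) = ρz⁻¹ ^ 2 • 1 := by
    rw [map_pow, inv_pow, inv_eq_of_mul_eq_one_right hcond2]
    exact Module.End.sq_eq_smul_one_of_swap_fin_two (σ g) w hgw0 hgw1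
  have hcyc : w'' = v 2 ⊗ₜ w' + v 0 ⊗ₜ ρ.tprod σ ε w' + v 1 ⊗ₜ ρ.tprod σ (ε ^ 2) w' := by
    rw [hw'', neg_one_sq, one_smul, neg_smul, one_smul, sub_neg_eq_add]
  set f := (v.tensorProduct (v.tensorProduct w)).coord (2, 0, 0)
  have hf : f w'' = 1 := by
    simp [f, hcyc, hw', Module.Basis.tensorProduct_repr_tmul_apply]
  have hfg : f (ρ.tprod (ρ.tprod σ) g w'') = 0 := by
    simp [f, hcyc, hw', Module.Basis.tensorProduct_repr_tmul_apply,
      Representation.tprod_apply, pow_two, hεv0, hεv1, hgv0, hgv1, hgv2]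
  have hw''0 : w'' ≠ 0 := fun h => by simp [h] at hf
  have hgw''0 : ρ.tprod (ρ.tprod σ) g w'' ≠ 0 :=
    (map_ne_zero_iff _ ((ρ.tprod (ρ.tprod σ)).apply_bijective g).injective).2 hw''0
  refine ⟨hw''0, linearIndependent_pair_of_apply_eq_zero f (by simp [hf]) hfg hgw''0, ?_, ?_, ?_⟩
  · rw [hcyc]
    exact ρ.tprod_apply_cyclic_sum_eq_self _ hrel2 hεv0 hεv1 hεv2 w'
  · rw [ρ.tprod_apply_eq_smul_one _ hρg2 (ρ.tprod_apply_eq_smul_one σ hρg2 hσg2)]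
    simp
  · rw [ρ.tprod_apply_eq_smul_one _ hρz (ρ.tprod_apply_eq_smul_one σ hρz hσz)]
    simp [pow_two, mul_assoc]

/-- For the second pair over a non-abelian epimorphic image of `Γ₃`, with
`1 + σ_ε + σ_ε² = 0`, `ρ_z² σ_{g²} = 1` and `ρ_g = −1`, the vector
`w″ = v₂⊗w′ + ρ_g² v₀⊗(ε·w′) − ρ_g v₁⊗(ε²·w′)` is non-zero, `w″` and `g·w″` are
linearly independent, `ε·w″ = w″`, `g²·w″ = ρ_z⁻² w″` and `z·w″ = ρ_z² σ_z w″`. -/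
theorem second_pair_adV_sq_W
    {K : Type*} [Field K] {G : Type*} [Group G]
    (g ε z : G) (hε : ε ≠ 1)
    (hgen : Subgroup.closure {g, ε, z} = ⊤)
    (hrel1 : g * ε * g⁻¹ = ε ^ 2) (hrel2 : ε ^ 3 = 1)
    (hrel3 : z * g = g * z) (hrel4 : z * ε = ε * z)
    {V : Type*} [AddCommGroup V] [Module K V]
    (ρ : Representation K G V) (v : Module.Basis (Fin 3) K V)
    (ρg ρz : K) (hρg : ρg ≠ 0) (hρz : ρz ≠ 0)
    (hεv0 : ρ ε (v 0) = v 1) (hεv1 : ρ ε (v 1) = v 2) (hεv2 : ρ ε (v 2) = v 0)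
    (hzv : ∀ i, ρ z (v i) = ρz • v i)
    (hgv0 : ρ g (v 0) = ρg • v 0) (hgv1 : ρ g (v 1) = ρg • v 2)
    (hgv2 : ρ g (v 2) = ρg • v 1)
    {W : Type*} [AddCommGroup W] [Module K W]
    (σ : Representation K G W) (w : Module.Basis (Fin 2) K W)
    (σε σz σg2 : K) (hσε : σε ≠ 0) (hσz : σz ≠ 0) (hσg2 : σg2 ≠ 0)
    (hεw0 : σ ε (w 0) = σε • w 0) (hεw1 : σ ε (w 1) = σε ^ 2 • w 1)
    (hzw0 : σ z (w 0) = σz • w 0) (hzw1 : σ z (w 1) = σz • w 1)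
    (hgw0 : σ g (w 0) = w 1) (hgw1 : σ g (w 1) = σg2 • w 0)
    (hcond1 : 1 + σε + σε ^ 2 = 0) (hcond2 : ρz ^ 2 * σg2 = 1)
    (hcond3 : ρg = -1) :
    ∀ (w' : V ⊗[K] W) (w'' : V ⊗[K] (V ⊗[K] W)),
      w' = v 0 ⊗ₜ[K] (w 0 - ρz • w 1) →
      w'' = v 2 ⊗ₜ[K] w' + ρg ^ 2 • (v 0 ⊗ₜ[K] ((ρ.tprod σ) ε w')) -
        ρg • (v 1 ⊗ₜ[K] ((ρ.tprod σ) (ε ^ 2) w')) →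
      w'' ≠ 0 ∧
      LinearIndependent K ![w'', (ρ.tprod (ρ.tprod σ)) g w''] ∧
      (ρ.tprod (ρ.tprod σ)) ε w'' = w'' ∧
      (ρ.tprod (ρ.tprod σ)) (g ^ 2) w'' = ρz⁻¹ ^ 2 • w'' ∧
      (ρ.tprod (ρ.tprod σ)) z w'' = (ρz ^ 2 * σz) • w'' :=
  second_pair_adV_sq_W_general g ε z hrel2 ρ v ρg ρz hεv0 hεv1 hεv2 hzv hgv0 hgv1 hgv2 σ w σz σg2
    hzw0 hzw1 hgw0 hgw1 hcond2 hcond3
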